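/- arXiv:1309.2802 — 3 statements merged into one kernel-verified Lean document; each statement's English description precedes it below -/
import Mathlib

section
/- In a finite Markov chain with a coloring col : S → D and a Muller condition F ⊆ P(D), started at state s, if some recurrent class C reachable from s satisfies col(C) ∈ F, then with positive probability the set of colors visited infinitely often belongs to F. -/
/-!
Fix a positive-probability prefix of the trajectory ending in `c ∈ C`. Almost surely every
transition taken has positive probability, so once the trajectory is in the closed class `C` it
stays there. For `c' ∈ C` every state of `C \ {c'}` reaches `c'`, hence there are `N` and `q < 1`
such that from any state the chain stays in `C \ {c'}` for `N` steps with probability at most `q`;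
by the Markov property it stays there for `r * N` steps with probability at most `q ^ r`, so it
stays there forever with probability zero. Almost surely, therefore, a trajectory through the
prefix visits exactly the states of `C` infinitely often, and `col '' C ∈ F`.
-/

open MeasureTheory

/-- Graph reachability in the positive-transition graph of a Markov chain. -/
def Reach {S : Type*} (δ : S → PMF S) : S → S → Prop :=
  Relation.ReflTransGen (fun s s' => δ s s' ≠ 0)

/-- A recurrent class: a bottom strongly connected component of the
positive-transition graph (nonempty, mutually reachable, closed under edges). -/
def IsRecClass {S : Type*} (δ : S → PMF S) (C : Set S) : Prop :=
  C.Nonempty ∧ (∀ x ∈ C, ∀ y ∈ C, Reach δ x y) ∧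
    (∀ x ∈ C, ∀ y, δ x y ≠ 0 → y ∈ C)

/-- `μ` is the trajectory measure of the Markov chain `δ` started at `s`:
a probability measure whose cylinder probabilities are given by the product
of the transition probabilities. -/
def IsMarkovMeasure {S : Type*} [Fintype S] [DecidableEq S] [MeasurableSpace S]
    (δ : S → PMF S) (s : S) (μ : Measure (ℕ → S)) : Prop :=
  IsProbabilityMeasure μ ∧
  ∀ (n : ℕ) (w : ℕ → S),
    μ {ρ | ∀ i ≤ n, ρ i = w i} =
      (if w 0 = s then 1 else 0) * ∏ i ∈ Finset.range n, δ (w i) (w (i + 1))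

open scoped ENNReal

namespace PMF

variable {S : Type*} [Fintype S] (p : PMF S)

theorem sum_coe_eq_one : ∑ x, p x = 1 := by
  rw [← tsum_fintype (L := SummationFilter.unconditional S)]
  exact p.tsum_coe

theorem sum_mul_le {f : S → ℝ≥0∞} {β : ℝ≥0∞} (hf : ∀ y, f y ≤ β) : ∑ y, p y * f y ≤ β :=
  calc ∑ y, p y * f y ≤ ∑ y, p y * β := by gcongr with y; exact hf y
    _ = β := by rw [← Finset.sum_mul, p.sum_coe_eq_one, one_mul]

theorem sum_mul_lt_one {f : S → ℝ≥0∞} {y : S} (hf : ∀ z, f z ≤ 1) (hy : p y ≠ 0)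
    (hfy : f y < 1) : ∑ z, p z * f z < 1 := by
  classical
  have hlt : p y * f y < p y := by
    simpa [mul_comm] using ENNReal.mul_lt_mul_left hy (p.apply_ne_top y) hfy
  calc ∑ z, p z * f z = p y * f y + ∑ z ∈ Finset.univ.erase y, p z * f z :=
        (Finset.add_sum_erase _ _ (Finset.mem_univ y)).symm
    _ < p y + ∑ z ∈ Finset.univ.erase y, p z := by
        refine ENNReal.add_lt_add_of_lt_of_le ?_ hlt ?_
        · exact ENNReal.sum_ne_top.2 fun z _ =>
            ENNReal.mul_ne_top (p.apply_ne_top z) ((hf z).trans_lt ENNReal.one_lt_top).ne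
        · exact Finset.sum_le_sum fun z _ => mul_le_of_le_one_right zero_le (hf z)
    _ = 1 := by rw [Finset.add_sum_erase _ _ (Finset.mem_univ y), p.sum_coe_eq_one]

end PMF

section StayWeight

variable {S : Type*} [Fintype S] (δ : S → PMF S)

/-- The probability that the chain started at `x` stays in `B` at times `0, …, n`. -/
noncomputable def stayWeight (B : Set S) : ℕ → S → ℝ≥0∞
  | 0 => B.indicator 1
  | n + 1 => B.indicator fun x => ∑ y, δ x y * stayWeight B n y

variable {δ} {B : Set S}

theorem stayWeight_succ (n : ℕ) (x : S) :
    stayWeight δ B (n + 1) x = B.indicator (fun x => ∑ y, δ x y * stayWeight δ B n y) x :=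
  rfl

theorem stayWeight_eq_zero_of_notMem {x : S} (hx : x ∉ B) (n : ℕ) : stayWeight δ B n x = 0 := by
  cases n <;> exact Set.indicator_of_notMem hx _

theorem stayWeight_of_mem {x : S} (hx : x ∈ B) (n : ℕ) :
    stayWeight δ B (n + 1) x = ∑ y, δ x y * stayWeight δ B n y :=
  Set.indicator_of_mem hx _

theorem stayWeight_le_one (n : ℕ) (x : S) : stayWeight δ B n x ≤ 1 := by
  induction n generalizing x with
  | zero => exact Set.indicator_le_self' (fun _ _ => zero_le_one) x
  | succ n ih =>
    by_cases hx : x ∈ B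
    · rw [stayWeight_of_mem hx]; exact (δ x).sum_mul_le ih
    · simp [stayWeight_eq_zero_of_notMem hx]

theorem stayWeight_succ_le (n : ℕ) (x : S) : stayWeight δ B (n + 1) x ≤ stayWeight δ B n x := by
  induction n generalizing x with
  | zero =>
    by_cases hx : x ∈ B
    · rw [stayWeight_of_mem hx, stayWeight, Set.indicator_of_mem hx]
      exact (δ x).sum_mul_le (stayWeight_le_one (δ := δ) 0)
    · simp [stayWeight_eq_zero_of_notMem hx]
  | succ n ih =>
    by_cases hx : x ∈ B
    · rw [stayWeight_of_mem hx, stayWeight_of_mem hx]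
      gcongr with y
      exact ih y
    · simp [stayWeight_eq_zero_of_notMem hx]

theorem stayWeight_antitone (x : S) : Antitone fun n => stayWeight δ B n x :=
  antitone_nat_of_succ_le fun n => stayWeight_succ_le n x

theorem stayWeight_add_le {t : ℕ} {β : ℝ≥0∞} (hβ : ∀ y, stayWeight δ B t y ≤ β) (n : ℕ) (x : S) :
    stayWeight δ B (n + t) x ≤ stayWeight δ B n x * β := by
  by_cases hx : x ∈ B
  swap
  · simp [stayWeight_eq_zero_of_notMem hx]
  induction n generalizing x with
  | zero => simpa [stayWeight, Set.indicator_of_mem hx] using hβ x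
  | succ n ih =>
    rw [add_right_comm, stayWeight_of_mem hx, stayWeight_of_mem hx, Finset.sum_mul]
    refine Finset.sum_le_sum fun y _ => ?_
    rw [mul_assoc]
    by_cases hy : y ∈ B
    · gcongr
      exact ih y hy
    · simp [stayWeight_eq_zero_of_notMem hy]

theorem stayWeight_mul_le_pow {N : ℕ} {q : ℝ≥0∞} (hq : ∀ y, stayWeight δ B N y ≤ q) (r : ℕ)
    (x : S) : stayWeight δ B (r * N) x ≤ q ^ r := by
  induction r with
  | zero => simpa using stayWeight_le_one 0 x
  | succ r ih =>
    calc stayWeight δ B ((r + 1) * N) x = stayWeight δ B (r * N + N) x := by rw [add_one_mul]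
      _ ≤ stayWeight δ B (r * N) x * q := stayWeight_add_le hq _ x
      _ ≤ q ^ r * q := by gcongr
      _ = q ^ (r + 1) := (pow_succ q r).symm

theorem exists_stayWeight_lt_one {x y : S} (h : Reach δ x y) (hy : y ∉ B) :
    ∃ ℓ, stayWeight δ B ℓ x < 1 := by
  induction h using Relation.ReflTransGen.head_induction_on with
  | refl => exact ⟨0, by simp [stayWeight_eq_zero_of_notMem hy]⟩
  | head hxz _ ih =>
    obtain ⟨ℓ, hℓ⟩ := ih
    refine ⟨ℓ + 1, ?_⟩
    rw [stayWeight_succ]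
    exact (Set.indicator_le_self' (fun _ _ => zero_le) _).trans_lt
      ((δ _).sum_mul_lt_one (stayWeight_le_one ℓ) hxz hℓ)

theorem exists_stayWeight_le_lt_one (hB : ∀ x ∈ B, ∃ y ∉ B, Reach δ x y) :
    ∃ N, ∃ q < 1, ∀ x, stayWeight δ B N x ≤ q := by
  have hlt : ∀ x, ∃ ℓ, stayWeight δ B ℓ x < 1 := fun x => by
    by_cases hx : x ∈ B
    · obtain ⟨y, hy, hxy⟩ := hB x hx
      exact exists_stayWeight_lt_one hxy hy
    · exact ⟨0, by simp [stayWeight_eq_zero_of_notMem hx]⟩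
  choose ℓ hℓ using hlt
  set N := Finset.univ.sup ℓ
  refine ⟨N, Finset.univ.sup (stayWeight δ B N), ?_, fun x => Finset.le_sup (Finset.mem_univ x)⟩
  refine (Finset.sup_lt_iff zero_lt_one).2 fun x _ => ?_
  exact (stayWeight_antitone x (Finset.le_sup (Finset.mem_univ x))).trans_lt (hℓ x)

end StayWeight

theorem Reach.exists_path {S : Type*} {δ : S → PMF S} {x y : S} (h : Reach δ x y) :
    ∃ (k : ℕ) (w : ℕ → S), w 0 = x ∧ w k = y ∧ ∀ i < k, δ (w i) (w (i + 1)) ≠ 0 := by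
  induction h with
  | refl => exact ⟨0, fun _ => x, rfl, rfl, fun i hi => absurd hi (Nat.not_lt_zero i)⟩
  | @tail b c _ hbc ih =>
    obtain ⟨k, w, hw0, hwk, hw⟩ := ih
    refine ⟨k + 1, Function.update w (k + 1) c, by simp [hw0], by simp, fun i hi => ?_⟩
    rcases Nat.lt_succ_iff_lt_or_eq.1 hi with hi | rfl
    · rw [Function.update_of_ne (by omega), Function.update_of_ne (by omega)]
      exact hw i hi
    · rwa [Function.update_of_ne (by omega), Function.update_self, hwk]

theorem mem_of_forall_transition_ne_zero {S : Type*} {δ : S → PMF S} {C : Set S}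
    (hC : ∀ x ∈ C, ∀ y, δ x y ≠ 0 → y ∈ C) {ρ : ℕ → S} (hρ : ∀ m, δ (ρ m) (ρ (m + 1)) ≠ 0)
    {k : ℕ} (hk : ρ k ∈ C) (j : ℕ) : ρ (k + j) ∈ C := by
  induction j with
  | zero => exact hk
  | succ j ih => exact hC _ ih _ (hρ (k + j))

section Prefix

variable {S : Type*} {δ : S → PMF S} {s : S}

def prefixCyl (k : ℕ) (w : ℕ → S) : Set (ℕ → S) := {ρ | ∀ i ≤ k, ρ i = w i}

theorem prefixCyl_subset_iUnion (k : ℕ) (w : ℕ → S) :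
    prefixCyl k w ⊆ ⋃ y, prefixCyl (k + 1) (Function.update w (k + 1) y) := by
  intro ρ hρ
  refine Set.mem_iUnion.2 ⟨ρ (k + 1), fun i hi => ?_⟩
  rcases Nat.lt_succ_iff_lt_or_eq.1 (Nat.lt_succ_of_le hi) with hi | rfl
  · rw [Function.update_of_ne (by omega)]
    exact hρ i (by omega)
  · rw [Function.update_self]

theorem prefixCyl_inter_stay_eq_empty {B : Set S} {k : ℕ} {w : ℕ → S} (hw : w k ∉ B) (t : ℕ) :
    prefixCyl k w ∩ {ρ | ∀ j ≤ t, ρ (k + j) ∈ B} = ∅ :=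
  Set.eq_empty_of_forall_notMem fun ρ ⟨hρ, hB⟩ => hw (by simpa [hρ k le_rfl] using hB 0 t.zero_le)

variable [DecidableEq S]

noncomputable def prefixWeight (δ : S → PMF S) (s : S) (k : ℕ) (w : ℕ → S) : ℝ≥0∞ :=
  (if w 0 = s then 1 else 0) * ∏ i ∈ Finset.range k, δ (w i) (w (i + 1))

theorem prefixWeight_ne_zero {k : ℕ} {w : ℕ → S} (hw0 : w 0 = s)
    (hw : ∀ i < k, δ (w i) (w (i + 1)) ≠ 0) : prefixWeight δ s k w ≠ 0 := by
  rw [prefixWeight, if_pos hw0, one_mul, Finset.prod_ne_zero_iff]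
  exact fun i hi => hw i (Finset.mem_range.1 hi)

theorem prefixWeight_update (k : ℕ) (w : ℕ → S) (y : S) :
    prefixWeight δ s (k + 1) (Function.update w (k + 1) y) = prefixWeight δ s k w * δ (w k) y := by
  have hprefix : ∀ i ∈ Finset.range k, δ (Function.update w (k + 1) y i)
      (Function.update w (k + 1) y (i + 1)) = δ (w i) (w (i + 1)) := fun i hi => by
    rw [Finset.mem_range] at hi
    rw [Function.update_of_ne (by omega), Function.update_of_ne (by omega)]
  rw [prefixWeight, prefixWeight, Finset.prod_range_succ, Finset.prod_congr rfl hprefix,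
    Function.update_of_ne (by omega), Function.update_of_ne (by omega), Function.update_self,
    mul_assoc]

end Prefix

section Trajectory

variable {S : Type*} [Fintype S] [MeasurableSpace S] {μ : Measure (ℕ → S)}

theorem measure_prefixCyl_inter_le (k : ℕ) (w : ℕ → S) (E : Set (ℕ → S)) :
    μ (prefixCyl k w ∩ E) ≤ ∑ y, μ (prefixCyl (k + 1) (Function.update w (k + 1) y) ∩ E) := by
  refine (measure_mono ?_).trans (measure_iUnion_fintype_le μ _)
  rw [← Set.iUnion_inter]
  exact Set.inter_subset_inter_left E (prefixCyl_subset_iUnion k w)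

variable [DecidableEq S] {δ : S → PMF S} {s : S}

theorem IsMarkovMeasure.measure_prefixCyl (hμ : IsMarkovMeasure δ s μ) (k : ℕ) (w : ℕ → S) :
    μ (prefixCyl k w) = prefixWeight δ s k w :=
  hμ.2 k w

/-- A bound on every cylinder, proportional to its weight, bounds the event itself: the
one-step extensions of a prefix split its weight according to `δ`, which sums to one. -/
theorem measure_le_of_forall_prefixCyl {Φ : ℕ → Set (ℕ → S)} {β : ℝ≥0∞}
    (hΦ : ∀ k w, μ (prefixCyl k w ∩ Φ k) ≤ prefixWeight δ s k w * β) (n : ℕ) : μ (Φ n) ≤ β := by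
  have hshift : ∀ f k w, μ (prefixCyl k w ∩ Φ (k + f)) ≤ prefixWeight δ s k w * β := by
    intro f
    induction f with
    | zero => exact hΦ
    | succ f ih =>
      intro k w
      calc μ (prefixCyl k w ∩ Φ (k + (f + 1)))
          ≤ ∑ y, μ (prefixCyl (k + 1) (Function.update w (k + 1) y) ∩ Φ (k + 1 + f)) := by
            rw [show k + (f + 1) = k + 1 + f by omega]
            exact measure_prefixCyl_inter_le k w _
        _ ≤ ∑ y, prefixWeight δ s (k + 1) (Function.update w (k + 1) y) * β :=
            Finset.sum_le_sum fun y _ => ih _ _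
        _ = prefixWeight δ s k w * β := by
            simp_rw [prefixWeight_update, mul_assoc, ← Finset.mul_sum, ← Finset.sum_mul,
              PMF.sum_coe_eq_one, one_mul]
  have hcover : Φ n ⊆ ⋃ y, prefixCyl 0 (fun _ => y) ∩ Φ (0 + n) := fun ρ hρ =>
    Set.mem_iUnion.2 ⟨ρ 0, fun i hi => by rw [Nat.le_zero.1 hi], by rwa [zero_add]⟩
  calc μ (Φ n) ≤ ∑ y, μ (prefixCyl 0 (fun _ => y) ∩ Φ (0 + n)) :=
        (measure_mono hcover).trans (measure_iUnion_fintype_le μ _)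
    _ ≤ ∑ y, prefixWeight δ s 0 (fun _ => y) * β := Finset.sum_le_sum fun y _ => hshift n 0 _
    _ = β := by simp [prefixWeight]

theorem IsMarkovMeasure.ae_transition_ne_zero (hμ : IsMarkovMeasure δ s μ) :
    ∀ᵐ ρ ∂μ, ∀ m, δ (ρ m) (ρ (m + 1)) ≠ 0 := by
  refine ae_all_iff.2 fun m => ?_
  rw [ae_iff]
  simp only [ne_eq, not_not]
  refine nonpos_iff_eq_zero.1 <| measure_le_of_forall_prefixCyl (δ := δ) (s := s)
    (Φ := fun m => {ρ | δ (ρ m) (ρ (m + 1)) = 0})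
    (fun k w => (measure_prefixCyl_inter_le k w _).trans (le_of_eq ?_)) m
  rw [mul_zero]
  refine Finset.sum_eq_zero fun y _ => ?_
  by_cases hy : δ (w k) y = 0
  · refine measure_mono_null Set.inter_subset_left ?_
    rw [hμ.measure_prefixCyl, prefixWeight_update, hy, mul_zero]
  · have hempty : prefixCyl (k + 1) (Function.update w (k + 1) y) ∩
        {ρ | δ (ρ k) (ρ (k + 1)) = 0} = ∅ :=
      Set.eq_empty_of_forall_notMem fun ρ ⟨hρ, hzero⟩ => hy <| by
        rwa [Set.mem_ofPred_eq, hρ k (by omega), hρ (k + 1) le_rfl, Function.update_self,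
          Function.update_of_ne (by omega)] at hzero
    rw [hempty, measure_empty]

theorem IsMarkovMeasure.measure_prefixCyl_inter_stay_le (hμ : IsMarkovMeasure δ s μ)
    (B : Set S) (t k : ℕ) (w : ℕ → S) :
    μ (prefixCyl k w ∩ {ρ | ∀ j ≤ t, ρ (k + j) ∈ B}) ≤
      prefixWeight δ s k w * stayWeight δ B t (w k) := by
  induction t generalizing k w with
  | zero =>
    by_cases hw : w k ∈ B
    swap
    · simp only [prefixCyl_inter_stay_eq_empty hw, measure_empty, zero_le]
    rw [stayWeight, Set.indicator_of_mem hw, Pi.one_apply, mul_one, ← hμ.measure_prefixCyl]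
    exact measure_mono Set.inter_subset_left
  | succ t ih =>
    by_cases hw : w k ∈ B
    swap
    · simp only [prefixCyl_inter_stay_eq_empty hw, measure_empty, zero_le]
    have hstay : {ρ : ℕ → S | ∀ j ≤ t + 1, ρ (k + j) ∈ B} ⊆ {ρ | ∀ j ≤ t, ρ (k + 1 + j) ∈ B} :=
      fun ρ hρ j hj => by simpa [add_assoc, add_comm 1 j] using hρ (j + 1) (by omega)
    calc μ (prefixCyl k w ∩ {ρ | ∀ j ≤ t + 1, ρ (k + j) ∈ B})
        ≤ ∑ y, μ (prefixCyl (k + 1) (Function.update w (k + 1) y) ∩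
            {ρ | ∀ j ≤ t, ρ (k + 1 + j) ∈ B}) :=
          (measure_mono (Set.inter_subset_inter_right _ hstay)).trans
            (measure_prefixCyl_inter_le k w _)
      _ ≤ ∑ y, prefixWeight δ s (k + 1) (Function.update w (k + 1) y) * stayWeight δ B t y := by
          refine Finset.sum_le_sum fun y _ => ?_
          simpa using ih (k + 1) (Function.update w (k + 1) y)
      _ = prefixWeight δ s k w * stayWeight δ B (t + 1) (w k) := by
          simp_rw [stayWeight_of_mem hw, Finset.mul_sum, prefixWeight_update, mul_assoc]

theorem IsMarkovMeasure.measure_stay_le (hμ : IsMarkovMeasure δ s μ) {B : Set S} {t : ℕ}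
    {β : ℝ≥0∞} (hβ : ∀ x, stayWeight δ B t x ≤ β) (n : ℕ) :
    μ {ρ | ∀ j ≤ t, ρ (n + j) ∈ B} ≤ β :=
  measure_le_of_forall_prefixCyl (Φ := fun n => {ρ | ∀ j ≤ t, ρ (n + j) ∈ B})
    (fun k w => (hμ.measure_prefixCyl_inter_stay_le B t k w).trans (by gcongr; exact hβ _)) n

theorem IsMarkovMeasure.measure_stay_forever_eq_zero (hμ : IsMarkovMeasure δ s μ) {B : Set S}
    (hB : ∀ x ∈ B, ∃ y ∉ B, Reach δ x y) (n : ℕ) : μ {ρ | ∀ j, ρ (n + j) ∈ B} = 0 := by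
  obtain ⟨N, q, hq1, hq⟩ := exists_stayWeight_le_lt_one hB
  have hpow : ∀ r : ℕ, μ {ρ | ∀ j, ρ (n + j) ∈ B} ≤ q ^ r := fun r =>
    (measure_mono (Set.ofPred_subset_ofPred.2 fun ρ hρ j _ => hρ j)).trans
      (hμ.measure_stay_le (stayWeight_mul_le_pow hq r) n)
  exact le_antisymm (ge_of_tendsto' (ENNReal.tendsto_pow_atTop_nhds_zero_of_lt_one hq1) hpow)
    zero_le

theorem IsMarkovMeasure.ae_infinitelyOften_eq (hμ : IsMarkovMeasure δ s μ) {C : Set S}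
    (hC : IsRecClass δ C) :
    ∀ᵐ ρ ∂μ, ∀ k, ρ k ∈ C → {t | ∀ n : ℕ, ∃ m, n ≤ m ∧ ρ m = t} = C := by
  have hvisit : ∀ c, ∀ᵐ ρ ∂μ, c ∈ C → ∀ n, ¬ ∀ j, ρ (n + j) ∈ C \ {c} := fun c => by
    by_cases hc : c ∈ C
    · refine (ae_all_iff.2 fun n => ?_).mono fun ρ hρ _ => hρ
      rw [ae_iff]
      simp only [not_not]
      exact hμ.measure_stay_forever_eq_zero
        (fun x hx => ⟨c, fun h => h.2 rfl, hC.2.1 x hx.1 c hc⟩) n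
    · exact ae_of_all _ fun _ h => absurd h hc
  filter_upwards [hμ.ae_transition_ne_zero, ae_all_iff.2 hvisit] with ρ hedge hvis k hk
  ext t
  constructor
  · intro ht
    obtain ⟨m, hm, rfl⟩ := ht k
    obtain ⟨j, rfl⟩ := Nat.exists_eq_add_of_le hm
    exact mem_of_forall_transition_ne_zero hC.2.2 hedge hk j
  · intro ht n
    by_contra hne
    push Not at hne
    refine hvis t ht (k + n) fun j => ⟨?_, hne _ (by omega)⟩
    rw [add_assoc]
    exact mem_of_forall_transition_ne_zero hC.2.2 hedge hk _

end Trajectory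

/-- If some recurrent class `C` reachable from `s` satisfies `col(C) ∈ F`, then with
positive probability the set of colors visited infinitely often belongs to `F`. -/
theorem stmt_7 {S D : Type*} [Fintype S] [DecidableEq S] [MeasurableSpace S]
    (δ : S → PMF S) (col : S → D) (F : Set (Set D)) (s : S)
    (h : ∃ C : Set S, IsRecClass δ C ∧ (∃ c ∈ C, Reach δ s c) ∧ col '' C ∈ F)
    (μ : Measure (ℕ → S)) (hμ : IsMarkovMeasure δ s μ) :
    μ {ρ | col '' {t | ∀ n : ℕ, ∃ m, n ≤ m ∧ ρ m = t} ∈ F} ≠ 0 := by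
  obtain ⟨C, hC, ⟨c, hc, hsc⟩, hF⟩ := h
  obtain ⟨k, w, hw0, hwk, hw⟩ := hsc.exists_path
  have hpos : μ (prefixCyl k w) ≠ 0 := by
    rw [hμ.measure_prefixCyl]
    exact prefixWeight_ne_zero hw0 hw
  refine fun h0 => hpos (measure_mono_null_ae ?_ h0)
  filter_upwards [hμ.ae_infinitelyOften_eq hC] with ρ hρ hcyl
  have hkC : ρ k ∈ C := by rw [hcyl k le_rfl, hwk]; exact hc
  show col '' _ ∈ F
  rwa [hρ k hkC]
end

section
/- In a finite Markov chain over S × M with coloring col : S → D, from every state (X, m) some pseudo-recurrent state is reachable, where a state (X', m') is pseudo-recurrent if (X', m') is recurrent and the set of color-projections of recurrent classes reachable from it is a singleton {Z∞} with col(X') ∈ Z∞. Consequently, from every starting state a pseudo-recurrent state is reached with probability 1. -/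
open MeasureTheory

/-- `SetRec δ col m s`: the set of color-projections of the recurrent classes of the
Markov chain `δ` on `S × M` reachable from `(s, m)`. -/
def SetRec {S M D : Type*} (δ : S × M → PMF (S × M)) (col : S → D) (m : M) (s : S) :
    Set (Set D) :=
  {Z | ∃ U : Set (S × M), IsRecClass δ U ∧ (∃ u ∈ U, Reach δ (s, m) u) ∧
        Z = col '' (Prod.fst '' U)}

/-- A state `(X', m')` is pseudo-recurrent if it is recurrent and the set of
color-projections of recurrent classes reachable from it is a singleton `{Z∞}`
with `col X' ∈ Z∞`. -/
def IsPseudoRec {S M D : Type*} (δ : S × M → PMF (S × M)) (col : S → D)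
    (x : S × M) : Prop :=
  (∃ C : Set (S × M), IsRecClass δ C ∧ x ∈ C) ∧
  ∃ Z : Set D, SetRec δ col x.2 x.1 = {Z} ∧ col x.1 ∈ Z

/-!
Every state of a recurrent class `C` is pseudo-recurrent: the only recurrent class reachable
from it is `C` itself, whose colour-projection contains its colour. Following edges to a state
from which the reachable set is minimal lands in a recurrent class, so pseudo-recurrent states
are reachable from everywhere. For the almost-sure statement, let `avoidProb n x` be the
probability of staying outside the target at times `0, …, n`. Reachability gives `N` with
`c := sup_x avoidProb N x < 1`, and restarting the chain every `N` steps gives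
`avoidProb (k * N) x ≤ c ^ k → 0`; the measure of the never-hitting paths is bounded by
`avoidProb n x` through a union of cylinders.
-/

open scoped ENNReal

theorem Relation.ReflTransGen.exists_terminal {α : Type*} [Finite α] (r : α → α → Prop)
    (x : α) :
    ∃ y, ReflTransGen r x y ∧ ∀ z, ReflTransGen r y z → ReflTransGen r z y := by
  obtain ⟨y, hxy, hmin⟩ :=
    exists_minimalFor_of_wellFoundedLT (ReflTransGen r x) (fun y => {z | ReflTransGen r y z})
      ⟨x, .refl⟩
  refine ⟨y, hxy, fun z hyz => ?_⟩
  have hsub : {w | ReflTransGen r z w} ⊆ {w | ReflTransGen r y w} := fun w hzw => hyz.trans hzw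
  exact hmin (hxy.trans hyz) hsub (ReflTransGen.refl (a := y))

section RecurrentClass

variable {Q : Type*} {δ : Q → PMF Q} {C U : Set Q}

theorem exists_isRecClass_reach [Finite Q] (δ : Q → PMF Q) (x : Q) :
    ∃ C, IsRecClass δ C ∧ ∃ y ∈ C, Reach δ x y := by
  obtain ⟨y, hxy, hback⟩ := Relation.ReflTransGen.exists_terminal (fun s s' => δ s s' ≠ 0) x
  refine ⟨{z | Reach δ y z}, ⟨⟨y, .refl⟩, fun a ha b hb => (hback a ha).trans hb,
    fun a ha b hab => .tail ha hab⟩, y, .refl, hxy⟩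

theorem IsRecClass.mem_of_reach (hC : IsRecClass δ C) {y z : Q} (hy : y ∈ C)
    (h : Reach δ y z) : z ∈ C := by
  induction h with
  | refl => exact hy
  | tail _ hbc ih => exact hC.2.2 _ ih _ hbc

theorem IsRecClass.eq_of_reach (hC : IsRecClass δ C) (hU : IsRecClass δ U) {y u : Q}
    (hy : y ∈ C) (hu : u ∈ U) (h : Reach δ y u) : U = C := by
  have huC : u ∈ C := hC.mem_of_reach hy h
  exact Set.Subset.antisymm (fun w hw => hC.mem_of_reach huC (hU.2.1 u hu w hw))
    (fun c hc => hU.mem_of_reach hu (hC.2.1 u huC c hc))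

theorem IsRecClass.isPseudoRec {S M D : Type*} {δ : S × M → PMF (S × M)} (col : S → D)
    {C : Set (S × M)} (hC : IsRecClass δ C) {y : S × M} (hy : y ∈ C) :
    IsPseudoRec δ col y := by
  refine ⟨⟨C, hC, hy⟩, col '' (Prod.fst '' C), ?_, y.1, ⟨y, hy, rfl⟩, rfl⟩
  ext Z
  constructor
  · rintro ⟨U, hU, ⟨u, hu, hyu⟩, rfl⟩
    rw [hC.eq_of_reach hU hy hu hyu]
    rfl
  · rintro rfl
    exact ⟨C, hC, ⟨y, hy, .refl⟩, rfl⟩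

theorem exists_reach_isPseudoRec {S M D : Type*} [Finite S] [Finite M]
    (δ : S × M → PMF (S × M)) (col : S → D) (x : S × M) :
    ∃ y, Reach δ x y ∧ IsPseudoRec δ col y := by
  obtain ⟨C, hC, y, hy, hxy⟩ := exists_isRecClass_reach δ x
  exact ⟨y, hxy, hC.isPseudoRec col hy⟩

end RecurrentClass

theorem PMF.tsum_mul_le_one {α : Type*} (p : PMF α) {f : α → ℝ≥0∞} (hf : ∀ a, f a ≤ 1) :
    ∑' a, p a * f a ≤ 1 :=
  calc ∑' a, p a * f a ≤ ∑' a, p a :=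
        ENNReal.tsum_le_tsum fun a => mul_le_of_le_one_right' (hf a)
    _ = 1 := p.tsum_coe

theorem PMF.tsum_mul_lt_one {α : Type*} (p : PMF α) {f : α → ℝ≥0∞} (hf : ∀ a, f a ≤ 1)
    {a : α} (ha : p a ≠ 0) (hfa : f a < 1) : ∑' a, p a * f a < 1 :=
  calc ∑' a, p a * f a < ∑' a, p a * 1 :=
        ENNReal.tsum_lt_tsum (ne_top_of_le_ne_top ENNReal.one_ne_top (p.tsum_mul_le_one hf))
          (fun b => mul_le_mul_right (hf b) _)
          (ENNReal.mul_lt_mul_right ha (p.apply_ne_top a) hfa)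
    _ = 1 := by simp only [mul_one, p.tsum_coe]

section AvoidProb

variable {Q : Type*} (δ : Q → PMF Q) (T : Set Q)

noncomputable def avoidProb : ℕ → Q → ℝ≥0∞
  | 0 => Tᶜ.indicator 1
  | n + 1 => Tᶜ.indicator fun x => ∑' y, δ x y * avoidProb n y

variable {δ T}

theorem avoidProb_of_mem {x : Q} (hx : x ∈ T) (n : ℕ) : avoidProb δ T n x = 0 := by
  cases n <;> exact Set.indicator_of_notMem (not_not_intro hx) _

theorem avoidProb_zero_of_notMem {x : Q} (hx : x ∉ T) : avoidProb δ T 0 x = 1 :=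
  Set.indicator_of_mem (s := Tᶜ) hx _

theorem avoidProb_succ_of_notMem {x : Q} (hx : x ∉ T) (n : ℕ) :
    avoidProb δ T (n + 1) x = ∑' y, δ x y * avoidProb δ T n y :=
  Set.indicator_of_mem (s := Tᶜ) hx _

theorem avoidProb_le_one (n : ℕ) (x : Q) : avoidProb δ T n x ≤ 1 := by
  induction n generalizing x with
  | zero => by_cases hx : x ∈ T <;> simp [avoidProb_of_mem, avoidProb_zero_of_notMem, hx]
  | succ n ih =>
    by_cases hx : x ∈ T
    · simp [avoidProb_of_mem hx]
    · rw [avoidProb_succ_of_notMem hx]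
      exact (δ x).tsum_mul_le_one ih

theorem avoidProb_succ_le (n : ℕ) (x : Q) : avoidProb δ T (n + 1) x ≤ avoidProb δ T n x := by
  induction n generalizing x with
  | zero =>
    by_cases hx : x ∈ T
    · simp [avoidProb_of_mem hx]
    · rw [avoidProb_zero_of_notMem hx]
      exact avoidProb_le_one 1 x
  | succ n ih =>
    by_cases hx : x ∈ T
    · simp [avoidProb_of_mem hx]
    · rw [avoidProb_succ_of_notMem hx, avoidProb_succ_of_notMem hx]
      exact ENNReal.tsum_le_tsum fun y => mul_le_mul_right (ih y) _

theorem antitone_avoidProb (x : Q) : Antitone fun n => avoidProb δ T n x :=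
  antitone_nat_of_succ_le fun n => avoidProb_succ_le n x

theorem avoidProb_add_le (m n : ℕ) (x : Q) :
    avoidProb δ T (m + n) x ≤ (⨆ y, avoidProb δ T n y) * avoidProb δ T m x := by
  induction m generalizing x with
  | zero =>
    by_cases hx : x ∈ T
    · simp [avoidProb_of_mem hx]
    · rw [zero_add, avoidProb_zero_of_notMem hx, mul_one]
      exact le_iSup (fun y => avoidProb δ T n y) x
  | succ m ih =>
    by_cases hx : x ∈ T
    · simp [avoidProb_of_mem hx]
    · rw [Nat.add_right_comm, avoidProb_succ_of_notMem hx, avoidProb_succ_of_notMem hx,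
        ← ENNReal.tsum_mul_left]
      refine ENNReal.tsum_le_tsum fun y => ?_
      calc δ x y * avoidProb δ T (m + n) y
          ≤ δ x y * ((⨆ y, avoidProb δ T n y) * avoidProb δ T m y) :=
            mul_le_mul_right (ih y) _
        _ = (⨆ y, avoidProb δ T n y) * (δ x y * avoidProb δ T m y) := mul_left_comm _ _ _

theorem avoidProb_mul_le_pow (N k : ℕ) (x : Q) :
    avoidProb δ T (k * N) x ≤ (⨆ y, avoidProb δ T N y) ^ k := by
  induction k generalizing x with
  | zero => simpa using avoidProb_le_one 0 x
  | succ k ih =>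
    calc avoidProb δ T ((k + 1) * N) x
        ≤ (⨆ y, avoidProb δ T N y) * avoidProb δ T (k * N) x := by
          rw [Nat.succ_mul]; exact avoidProb_add_le _ _ x
      _ ≤ (⨆ y, avoidProb δ T N y) * (⨆ y, avoidProb δ T N y) ^ k :=
          mul_le_mul_right (ih x) _
      _ = (⨆ y, avoidProb δ T N y) ^ (k + 1) := (pow_succ' _ _).symm

theorem exists_avoidProb_lt_one_of_reach {x t : Q} (hxt : Reach δ x t) (ht : t ∈ T) :
    ∃ n, avoidProb δ T n x < 1 := by
  induction hxt using Relation.ReflTransGen.head_induction_on with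
  | refl => exact ⟨0, by simp [avoidProb_of_mem ht]⟩
  | @head a b hab _ ih =>
    obtain ⟨n, hn⟩ := ih
    by_cases ha : a ∈ T
    · exact ⟨0, by simp [avoidProb_of_mem ha]⟩
    · refine ⟨n + 1, ?_⟩
      rw [avoidProb_succ_of_notMem ha]
      exact (δ a).tsum_mul_lt_one (avoidProb_le_one n) hab hn

theorem iInf_avoidProb_eq_zero [Finite Q] (hT : ∀ x, ∃ t, Reach δ x t ∧ t ∈ T) (x : Q) :
    ⨅ n, avoidProb δ T n x = 0 := by
  choose n hn using fun y =>
    (hT y).elim fun t ht => exists_avoidProb_lt_one_of_reach (T := T) ht.1 ht.2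
  have : Fintype Q := Fintype.ofFinite Q
  set N := Finset.univ.sup n
  have hN : (⨆ y, avoidProb δ T N y) < 1 := by
    rw [← Finset.sup_univ_eq_iSup, Finset.sup_lt_iff zero_lt_one]
    exact fun y _ => (antitone_avoidProb y (Finset.le_sup (Finset.mem_univ y))).trans_lt (hn y)
  refine le_antisymm (ge_of_tendsto' (ENNReal.tendsto_pow_atTop_nhds_zero_of_lt_one hN)
    fun k => (iInf_le _ (k * N)).trans (avoidProb_mul_le_pow N k x)) zero_le

end AvoidProb

namespace IsMarkovMeasure

variable {Q : Type*} [Fintype Q] [DecidableEq Q] [MeasurableSpace Q] {δ : Q → PMF Q} {s : Q}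
  {μ : Measure (ℕ → Q)}

theorem measure_cylinder_update (hμ : IsMarkovMeasure δ s μ) (m : ℕ) (w : ℕ → Q) (a : Q) :
    μ {ρ | ∀ i ≤ m + 1, ρ i = Function.update w (m + 1) a i} =
      μ {ρ | ∀ i ≤ m, ρ i = w i} * δ (w m) a := by
  have hupdate : ∀ i ≤ m, Function.update w (m + 1) a i = w i := fun i hi =>
    Function.update_of_ne (by omega) _ _
  rw [hμ.2, hμ.2, Finset.prod_range_succ, ← mul_assoc, hupdate 0 (Nat.zero_le m), hupdate m le_rfl,
    Function.update_self]
  congr 2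
  exact Finset.prod_congr rfl fun i hi => by
    rw [Finset.mem_range] at hi
    rw [hupdate i hi.le, hupdate (i + 1) hi]

theorem measure_cylinder_inter_avoid_le (hμ : IsMarkovMeasure δ s μ) (T : Set Q) (n m : ℕ)
    (w : ℕ → Q) :
    μ ({ρ | ∀ i ≤ m, ρ i = w i} ∩ {ρ | ∀ j, m ≤ j → j ≤ m + n → ρ j ∉ T}) ≤
      μ {ρ | ∀ i ≤ m, ρ i = w i} * avoidProb δ T n (w m) := by
  have hempty : ∀ {k m : ℕ} {w : ℕ → Q}, w m ∈ T →
      μ ({ρ | ∀ i ≤ m, ρ i = w i} ∩ {ρ | ∀ j, m ≤ j → j ≤ m + k → ρ j ∉ T}) = 0 := fun hw =>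
    measure_mono_null (fun ρ hρ => hρ.2 _ le_rfl (Nat.le_add_right _ _) (hρ.1 _ le_rfl ▸ hw))
      measure_empty
  induction n generalizing m w with
  | zero =>
    by_cases hw : w m ∈ T
    · exact (hempty hw).trans_le zero_le
    · rw [avoidProb_zero_of_notMem hw, mul_one]
      exact measure_mono Set.inter_subset_left
  | succ n ih =>
    by_cases hw : w m ∈ T
    · exact (hempty hw).trans_le zero_le
    have hcover : {ρ : ℕ → Q | ∀ i ≤ m, ρ i = w i} ∩
        {ρ | ∀ j, m ≤ j → j ≤ m + (n + 1) → ρ j ∉ T} ⊆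
        ⋃ a, {ρ | ∀ i ≤ m + 1, ρ i = Function.update w (m + 1) a i} ∩
          {ρ | ∀ j, m + 1 ≤ j → j ≤ m + 1 + n → ρ j ∉ T} := by
      refine fun ρ ⟨hcyl, havoid⟩ => Set.mem_iUnion.2 ⟨ρ (m + 1), fun i hi => ?_,
        fun j hj hj' => havoid j (by omega) (by omega)⟩
      rcases Nat.lt_or_eq_of_le hi with hi | rfl
      · rw [Function.update_of_ne (by omega), hcyl i (by omega)]
      · rw [Function.update_self]
    calc _ ≤ ∑' a, μ ({ρ | ∀ i ≤ m + 1, ρ i = Function.update w (m + 1) a i} ∩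
              {ρ | ∀ j, m + 1 ≤ j → j ≤ m + 1 + n → ρ j ∉ T}) :=
          (measure_mono hcover).trans (measure_iUnion_le _)
      _ ≤ ∑' a, μ {ρ | ∀ i ≤ m + 1, ρ i = Function.update w (m + 1) a i} *
            avoidProb δ T n a :=
          ENNReal.tsum_le_tsum fun a => by
            simpa only [Function.update_self] using ih (m + 1) (Function.update w (m + 1) a)
      _ = _ := by
          simp_rw [hμ.measure_cylinder_update, mul_assoc, ENNReal.tsum_mul_left,
            avoidProb_succ_of_notMem hw]

theorem measure_avoid_le (hμ : IsMarkovMeasure δ s μ) (T : Set Q) (n : ℕ) :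
    μ {ρ | ∀ j ≤ n, ρ j ∉ T} ≤ avoidProb δ T n s := by
  -- The start state is summed over rather than fixed: `{ρ | ρ 0 = s}` need not be measurable,
  -- so only monotonicity and subadditivity of `μ` are available.
  have hcover : {ρ : ℕ → Q | ∀ j ≤ n, ρ j ∉ T} ⊆
      ⋃ a, {ρ | ∀ i ≤ 0, ρ i = a} ∩ {ρ | ∀ j, 0 ≤ j → j ≤ 0 + n → ρ j ∉ T} :=
    fun ρ hρ => Set.mem_iUnion.2
      ⟨ρ 0, fun i hi => by rw [Nat.le_zero.1 hi], fun j _ hj => hρ j (by omega)⟩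
  calc μ {ρ | ∀ j ≤ n, ρ j ∉ T}
      ≤ ∑' a, μ ({ρ | ∀ i ≤ 0, ρ i = a} ∩ {ρ | ∀ j, 0 ≤ j → j ≤ 0 + n → ρ j ∉ T}) :=
        (measure_mono hcover).trans (measure_iUnion_le _)
    _ ≤ ∑' a, μ {ρ | ∀ i ≤ 0, ρ i = a} * avoidProb δ T n a :=
        ENNReal.tsum_le_tsum fun a => hμ.measure_cylinder_inter_avoid_le T n 0 fun _ => a
    _ = avoidProb δ T n s := by
        simp only [hμ.2, Finset.range_zero, Finset.prod_empty, mul_one, ite_mul, one_mul,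
          zero_mul]
        exact tsum_ite_eq s _

theorem measure_exists_mem_eq_one (hμ : IsMarkovMeasure δ s μ) {T : Set Q}
    (hT : ∀ x, ∃ t, Reach δ x t ∧ t ∈ T) : μ {ρ | ∃ n, ρ n ∈ T} = 1 := by
  have : IsProbabilityMeasure μ := hμ.1
  have hcompl : μ {ρ | ∃ n, ρ n ∈ T}ᶜ = 0 := by
    refine le_antisymm ?_ zero_le
    rw [← iInf_avoidProb_eq_zero hT s]
    refine le_iInf fun n => le_trans (measure_mono ?_) (hμ.measure_avoid_le T n)
    exact fun ρ hρ j _ hj => hρ ⟨j, hj⟩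
  rw [measure_congr (ae_eq_univ.2 hcompl), measure_univ]

end IsMarkovMeasure

/-- From every state some pseudo-recurrent state is reachable; consequently, from
every starting state a pseudo-recurrent state is reached with probability 1. -/
theorem stmt_15 {S M D : Type*} [Fintype S] [Fintype M]
    [DecidableEq S] [DecidableEq M] [MeasurableSpace S] [MeasurableSpace M]
    (δ : S × M → PMF (S × M)) (col : S → D) :
    (∀ x : S × M, ∃ y : S × M, Reach δ x y ∧ IsPseudoRec δ col y) ∧
    ∀ (x : S × M) (μ : Measure (ℕ → S × M)), IsMarkovMeasure δ x μ →
      μ {ρ | ∃ n, IsPseudoRec δ col (ρ n)} = 1 :=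
  ⟨exists_reach_isPseudoRec δ col, fun _ _ hμ =>
    hμ.measure_exists_mem_eq_one (T := {y | IsPseudoRec δ col y})
      (exists_reach_isPseudoRec δ col)⟩
end

section
/- Given a POMDP G with |S| states and a parity objective with 2d+2 priorities {0,…,2d+1}, the reduction POMDP Ḡ on state set S × {0,…,d} (with transitions mimicking G but moving to copy i−1 with probability 1/2 from states of priority < 2i) satisfies: every recurrent class of Ḡ↾σ, for any finite-memory strategy σ, is contained in a single copy S × {i} × M, and contains no state (s,i,m) with p(s) < 2i. -/
open MeasureTheory

/-!
Along every positive transition of `Ḡ↾σ` the copy index stays the same or drops by one, so it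
is antitone along reachability and hence constant on a recurrent class. From a state `(s, i, m)`
with `p s < 2i` the chain moves with positive probability to copy `i - 1`; in a recurrent class
that successor would lie in the class again, contradicting constancy of the index.
-/

namespace Reach

theorem antitone_of_edge {S β : Type*} [Preorder β] {δ : S → PMF S} {f : S → β}
    (hf : ∀ x y, δ x y ≠ 0 → f y ≤ f x) {x y : S} (h : Reach δ x y) : f y ≤ f x := by
  induction h with
  | refl => exact le_rfl
  | tail _ hyz ih => exact (hf _ _ hyz).trans ih

end Reach

namespace IsRecClass

variable {S β : Type*} [PartialOrder β] {δ : S → PMF S} {C : Set S} {f : S → β}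

theorem eq_of_edge_le (hC : IsRecClass δ C) (hf : ∀ x y, δ x y ≠ 0 → f y ≤ f x)
    {x y : S} (hx : x ∈ C) (hy : y ∈ C) : f x = f y :=
  le_antisymm (Reach.antitone_of_edge hf (hC.2.1 y hy x hx))
    (Reach.antitone_of_edge hf (hC.2.1 x hx y hy))

end IsRecClass

/-- `chain` is the Markov chain `Ḡ↾σ` on `S × I × M` induced by the finite-memory strategy
`(σn, σu)` on the reduction POMDP `Ḡ`. -/
def IsReductionChain {S A O M : Type*} [Fintype A] {d : ℕ} (δ : S → A → PMF S) (p : S → ℕ)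
    (γ : S → O) (σn : M → PMF A) (σu : M → O → A → PMF M)
    (chain : S × Fin (d + 1) × M → PMF (S × Fin (d + 1) × M)) : Prop :=
  ∀ (s : S) (i : Fin (d + 1)) (m : M) (s' : S) (j : Fin (d + 1)) (m' : M),
    chain (s, i, m) (s', j, m') =
      ∑ a : A, σn m a *
        (if (j : ℕ) = (i : ℕ) then
           (if 2 * (i : ℕ) ≤ p s then δ s a s' else δ s a s' / 2)
         else if (j : ℕ) + 1 = (i : ℕ) ∧ p s < 2 * (i : ℕ) then δ s a s' / 2
         else 0) * σu m (γ s') a m'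

namespace IsReductionChain

variable {S A O M : Type*} [Fintype A] {d : ℕ} {δ : S → A → PMF S} {p : S → ℕ} {γ : S → O}
  {σn : M → PMF A} {σu : M → O → A → PMF M}
  {chain : S × Fin (d + 1) × M → PMF (S × Fin (d + 1) × M)}

theorem index_of_ne_zero (hchain : IsReductionChain δ p γ σn σu chain)
    {x y : S × Fin (d + 1) × M} (hxy : chain x y ≠ 0) :
    (y.2.1 : ℕ) = x.2.1 ∨ (y.2.1 : ℕ) + 1 = x.2.1 ∧ p x.1 < 2 * (x.2.1 : ℕ) := by
  obtain ⟨s, i, m⟩ := x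
  obtain ⟨s', j, m'⟩ := y
  by_contra hstay
  refine hxy ((hchain s i m s' j m').trans (Finset.sum_eq_zero fun a _ => ?_))
  rw [if_neg fun h => hstay (Or.inl h), if_neg fun h => hstay (Or.inr h), mul_zero, zero_mul]

theorem index_le_of_ne_zero (hchain : IsReductionChain δ p γ σn σu chain)
    {x y : S × Fin (d + 1) × M} (hxy : chain x y ≠ 0) : (y.2.1 : ℕ) ≤ x.2.1 := by
  rcases hchain.index_of_ne_zero hxy with h | ⟨h, -⟩ <;> omega

theorem exists_ne_zero_index_pred (hchain : IsReductionChain δ p γ σn σu chain)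
    {s : S} {i : Fin (d + 1)} (m : M) (hlt : p s < 2 * (i : ℕ)) :
    ∃ y, chain (s, i, m) y ≠ 0 ∧ (y.2.1 : ℕ) + 1 = i := by
  obtain ⟨a, ha⟩ := (σn m).support_nonempty
  obtain ⟨s', hs'⟩ := (δ s a).support_nonempty
  obtain ⟨m', hm'⟩ := (σu m (γ s') a).support_nonempty
  rw [PMF.mem_support_iff] at ha hs' hm'
  have hj : (i : ℕ) - 1 + 1 = i := by omega
  let j : Fin (d + 1) := ⟨(i : ℕ) - 1, by omega⟩
  refine ⟨(s', j, m'), ?_, hj⟩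
  rw [hchain]
  intro hsum
  have h := Finset.sum_eq_zero_iff.mp hsum a (Finset.mem_univ a)
  rw [if_neg (show (j : ℕ) ≠ i by simp only [j]; omega), if_pos ⟨hj, hlt⟩] at h
  have hhalf : δ s a s' / 2 ≠ 0 := by simp [ENNReal.div_eq_zero_iff, hs']
  exact mul_ne_zero (mul_ne_zero ha hhalf) hm' h

theorem index_eq_of_mem (hchain : IsReductionChain δ p γ σn σu chain)
    {C : Set (S × Fin (d + 1) × M)} (hC : IsRecClass chain C) {x y : S × Fin (d + 1) × M}
    (hx : x ∈ C) (hy : y ∈ C) : x.2.1 = y.2.1 :=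
  Fin.ext <| hC.eq_of_edge_le (f := fun x => (x.2.1 : ℕ))
    (fun _ _ => hchain.index_le_of_ne_zero) hx hy

theorem two_mul_index_le_of_mem (hchain : IsReductionChain δ p γ σn σu chain)
    {C : Set (S × Fin (d + 1) × M)} (hC : IsRecClass chain C) {x : S × Fin (d + 1) × M}
    (hx : x ∈ C) : 2 * (x.2.1 : ℕ) ≤ p x.1 := by
  by_contra! hlt
  obtain ⟨y, hxy, hy⟩ := hchain.exists_ne_zero_index_pred x.2.2 hlt
  have := congrArg Fin.val (hchain.index_eq_of_mem hC (hC.2.2 x hx y hxy) hx)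
  omega

end IsReductionChain

theorem stmt_17_general {S A O M : Type*} [Fintype A]
    (d : ℕ) (δ : S → A → PMF S) (p : S → ℕ)
    (γ : S → O) (σn : M → PMF A) (σu : M → O → A → PMF M)
    (chain : S × Fin (d + 1) × M → PMF (S × Fin (d + 1) × M))
    (hchain : ∀ (s : S) (i : Fin (d + 1)) (m : M) (s' : S) (j : Fin (d + 1)) (m' : M),
      chain (s, i, m) (s', j, m') =
        ∑ a : A, σn m a *
          (if (j : ℕ) = (i : ℕ) then
             (if 2 * (i : ℕ) ≤ p s then δ s a s' else δ s a s' / 2)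
           else if (j : ℕ) + 1 = (i : ℕ) ∧ p s < 2 * (i : ℕ) then δ s a s' / 2
           else 0) * σu m (γ s') a m')
    (C : Set (S × Fin (d + 1) × M)) (hC : IsRecClass chain C) :
    ∃ i : Fin (d + 1), (∀ x ∈ C, x.2.1 = i) ∧ ∀ x ∈ C, 2 * (i : ℕ) ≤ p x.1 := by
  have hred : IsReductionChain δ p γ σn σu chain := hchain
  obtain ⟨x₀, hx₀⟩ := hC.1
  exact ⟨x₀.2.1, fun x hx => hred.index_eq_of_mem hC hx hx₀,
    fun x hx => hred.index_eq_of_mem hC hx hx₀ ▸ hred.two_mul_index_le_of_mem hC hx⟩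

/-- The reduction POMDP `Ḡ` on `S × {0,…,d}`: the chain `Ḡ↾σ` induced by a
finite-memory strategy `σ` (action selection `σn`, memory update `σu`) has the
property that every recurrent class is contained in a single copy `S × {i} × M`
and contains no state `(s,i,m)` with `p s < 2i`. -/
theorem stmt_17 {S A O M : Type*} [Fintype S] [Fintype A] [Fintype M]
    (d : ℕ) (δ : S → A → PMF S) (p : S → ℕ) (hp : ∀ s, p s ≤ 2 * d + 1)
    (γ : S → O) (σn : M → PMF A) (σu : M → O → A → PMF M)
    (chain : S × Fin (d + 1) × M → PMF (S × Fin (d + 1) × M))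
    (hchain : ∀ (s : S) (i : Fin (d + 1)) (m : M) (s' : S) (j : Fin (d + 1)) (m' : M),
      chain (s, i, m) (s', j, m') =
        ∑ a : A, σn m a *
          (if (j : ℕ) = (i : ℕ) then
             (if 2 * (i : ℕ) ≤ p s then δ s a s' else δ s a s' / 2)
           else if (j : ℕ) + 1 = (i : ℕ) ∧ p s < 2 * (i : ℕ) then δ s a s' / 2
           else 0) * σu m (γ s') a m')
    (C : Set (S × Fin (d + 1) × M)) (hC : IsRecClass chain C) :
    ∃ i : Fin (d + 1), (∀ x ∈ C, x.2.1 = i) ∧ ∀ x ∈ C, 2 * (i : ℕ) ≤ p x.1 :=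
  stmt_17_general d δ p γ σn σu chain hchain C hC
end
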